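/- At a point p of a minimal time-like surface in ℝⁿ₁, the condition (Φ′⊥)²(p) ∈ D₀ (p is a degenerate point) holds if and only if for some (equivalently, every) orthonormal basis (X₁, X₂) of T_p M with X₁² = -1 one has σ(X₁,X₁) = ±σ(X₁,X₂). Moreover at every degenerate point the Gauss curvature vanishes. -/

import Mathlib

noncomputable section

/-- The algebra of double numbers `D = {u + j v : j² = 1}`, modeled on `ℝ × ℝ`
(null-basis / idempotent coordinates), with the componentwise ring structure. -/
abbrev DNum : Type := ℝ × ℝ

namespace DNum

/-- The imaginary unit `j`, with `j * j = 1`. -/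
def j : DNum := (-1, 1)

/-- The embedding of `ℝ` into the double numbers. -/
def ofReal (u : ℝ) : DNum := (u, u)

/-- The double number `u + j v`. -/
def mk' (u v : ℝ) : DNum := ofReal u + j * ofReal v

/-- Conjugation `u + j v ↦ u - j v`. -/
def conj (t : DNum) : DNum := (t.2, t.1)

/-- The real part of a double number. -/
def re (t : DNum) : ℝ := (t.1 + t.2) / 2

/-- The imaginary part of a double number. -/
def im (t : DNum) : ℝ := (t.2 - t.1) / 2

/-- `q = (1 - j)/2`. -/
def q : DNum := (2⁻¹ : ℝ) • ((1 : DNum) - j)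

/-- `q̄ = (1 + j)/2`. -/
def qbar : DNum := (2⁻¹ : ℝ) • ((1 : DNum) + j)

/-- `|t|² = t·t̄ = u² - v²`. -/
def absSq (t : DNum) : ℝ := re (t * conj t)

/-- The set `D₊` of positive double numbers `a q + b q̄`, `a > 0`, `b > 0`. -/
def Dpos : Set DNum := {t | ∃ a b : ℝ, 0 < a ∧ 0 < b ∧ t = a • q + b • qbar}

/-- Directional (partial) derivative in direction `w`. -/
def pd {E : Type*} [NormedAddCommGroup E] [NormedSpace ℝ E]
    (w : ℝ × ℝ) (f : ℝ × ℝ → E) (p : ℝ × ℝ) : E := fderiv ℝ f p w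

/-- Partial derivative `∂/∂u`. -/
def pu {E : Type*} [NormedAddCommGroup E] [NormedSpace ℝ E]
    (f : ℝ × ℝ → E) : (ℝ × ℝ) → E := pd ((1 : ℝ), (0 : ℝ)) f

/-- Partial derivative `∂/∂v`. -/
def pv {E : Type*} [NormedAddCommGroup E] [NormedSpace ℝ E]
    (f : ℝ × ℝ → E) : (ℝ × ℝ) → E := pd ((0 : ℝ), (1 : ℝ)) f

/-- `∂f/∂t̄ = (1/2)(∂f/∂u - j ∂f/∂v)` for a `D`-valued function of `t = u + j v`. -/
def dbar (f : ℝ × ℝ → DNum) (p : ℝ × ℝ) : DNum := (2⁻¹ : ℝ) • (pu f p - j * pv f p)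

/-- `∂f/∂t = (1/2)(∂f/∂u + j ∂f/∂v)` for a `D`-valued function of `t = u + j v`. -/
def dt (f : ℝ × ℝ → DNum) (p : ℝ × ℝ) : DNum := (2⁻¹ : ℝ) • (pu f p + j * pv f p)

/-- The Minkowski signature `(-1, 1, …, 1)`. -/
def minkEta (m : ℕ) (i : Fin m) : ℝ := if (i : ℕ) = 0 then -1 else 1

variable {n : ℕ}

/-- The Minkowski scalar product on `ℝⁿ₁`. -/
def mink (a b : Fin n → ℝ) : ℝ := ∑ i, minkEta n i * (a i * b i)

/-- The `D`-bilinear extension of the Minkowski scalar product to `Dⁿ₁`. -/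
def minkD (A B : Fin n → DNum) : DNum := ∑ i, ofReal (minkEta n i) * (A i * B i)

/-- Componentwise conjugation on `Dⁿ₁`. -/
def conjV (A : Fin n → DNum) : Fin n → DNum := fun i => conj (A i)

/-- The (real) squared norm `‖A‖² = A·Ā` on `Dⁿ₁`. -/
def normSqV (A : Fin n → DNum) : ℝ := re (minkD A (conjV A))

/-- `∂/∂t̄` applied componentwise to a `Dⁿ₁`-valued function. -/
def dbarV (F : ℝ × ℝ → Fin n → DNum) (p : ℝ × ℝ) : Fin n → DNum :=
  fun i => dbar (fun z => F z i) p

/-- `∂/∂t` applied componentwise to a `Dⁿ₁`-valued function. -/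
def dtV (F : ℝ × ℝ → Fin n → DNum) (p : ℝ × ℝ) : Fin n → DNum :=
  fun i => dt (fun z => F z i) p

/-- Scalar multiplication of a `Dⁿ₁` vector by a double number. -/
def smulD (c : DNum) (A : Fin n → DNum) : Fin n → DNum := fun i => c * A i

/-- `x_u`. -/
def xu (x : ℝ × ℝ → Fin n → ℝ) : (ℝ × ℝ) → Fin n → ℝ := fun p => pu x p

/-- `x_v`. -/
def xv (x : ℝ × ℝ → Fin n → ℝ) : (ℝ × ℝ) → Fin n → ℝ := fun p => pv x p

/-- `Φ = x_u + j x_v`. -/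
def Phi (x : ℝ × ℝ → Fin n → ℝ) : (ℝ × ℝ) → Fin n → DNum :=
  fun p i => mk' (xu x p i) (xv x p i)

/-- `E = x_u²`. -/
def Efun (x : ℝ × ℝ → Fin n → ℝ) (p : ℝ × ℝ) : ℝ := mink (xu x p) (xu x p)

/-- `F = x_u · x_v`. -/
def Ffun (x : ℝ × ℝ → Fin n → ℝ) (p : ℝ × ℝ) : ℝ := mink (xu x p) (xv x p)

/-- `G = x_v²`. -/
def Gfun (x : ℝ × ℝ → Fin n → ℝ) (p : ℝ × ℝ) : ℝ := mink (xv x p) (xv x p)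

/-- Isothermal coordinates for a time-like surface, with the convention `E < 0`:
`E = -G < 0`, `F = 0`. -/
def Isoth (x : ℝ × ℝ → Fin n → ℝ) (p : ℝ × ℝ) : Prop :=
  Efun x p < 0 ∧ Gfun x p = - Efun x p ∧ Ffun x p = 0

/-- Orthogonal projection onto the normal space (valid in isothermal coordinates,
where `F = 0` and the tangent directions `x_u`, `x_v` are non-null). -/
def perp (x : ℝ × ℝ → Fin n → ℝ) (p : ℝ × ℝ) (w : Fin n → ℝ) : Fin n → ℝ :=
  w - (mink w (xu x p) / Efun x p) • xu x p - (mink w (xv x p) / Gfun x p) • xv x p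

/-- `σ(x_u, x_u) = (x_uu)^⊥`. -/
def sUU (x : ℝ × ℝ → Fin n → ℝ) (p : ℝ × ℝ) : Fin n → ℝ := perp x p (pu (xu x) p)

/-- `σ(x_u, x_v) = (x_uv)^⊥`. -/
def sUV (x : ℝ × ℝ → Fin n → ℝ) (p : ℝ × ℝ) : Fin n → ℝ := perp x p (pv (xu x) p)

/-- `σ(x_v, x_v) = (x_vv)^⊥`. -/
def sVV (x : ℝ × ℝ → Fin n → ℝ) (p : ℝ × ℝ) : Fin n → ℝ := perp x p (pv (xv x) p)

/-- The mean curvature vector `H = (1/2)(-σ(X₁,X₁) + σ(X₂,X₂))` expressed in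
isothermal coordinates: `H = (1/(2E))(σ(x_u,x_u) - σ(x_v,x_v))`. -/
def Hmean (x : ℝ × ℝ → Fin n → ℝ) (p : ℝ × ℝ) : Fin n → ℝ :=
  (1 / (2 * Efun x p)) • (sUU x p - sVV x p)

/-- The Gauss curvature of a minimal time-like surface in isothermal coordinates:
`K = -σ²(X₁,X₁) + σ²(X₁,X₂) = (-σ²(x_u,x_u) + σ²(x_u,x_v))/E²`. -/
def Kgauss (x : ℝ × ℝ → Fin n → ℝ) (p : ℝ × ℝ) : ℝ :=
  (-(mink (sUU x p) (sUU x p)) + mink (sUV x p) (sUV x p)) / (Efun x p) ^ 2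

/-- `Φ′ = ∂Φ/∂t`. -/
def PhiP (x : ℝ × ℝ → Fin n → ℝ) : (ℝ × ℝ) → Fin n → DNum := fun p => dtV (Phi x) p

/-- The normal projection `Φ′^⊥ = Φ′ - ((Φ′·Φ̄)/‖Φ‖²) Φ`. -/
def PhiPperp (x : ℝ × ℝ → Fin n → ℝ) (p : ℝ × ℝ) : Fin n → DNum :=
  fun i => PhiP x p i -
    (minkD (PhiP x p) (conjV (Phi x p)) * ofReal (normSqV (Phi x p))⁻¹) * Phi x p i

/-- `σ(x_u,x_u) + j σ(x_u,x_v)` (which equals `Φ′^⊥` on a minimal surface). -/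
def SigmaJ (x : ℝ × ℝ → Fin n → ℝ) (p : ℝ × ℝ) : Fin n → DNum :=
  fun i => mk' (sUU x p i) (sUV x p i)

/-- `σ(a x_u + b x_v, c x_u + d x_v)` by bilinearity. -/
def sigComb (x : ℝ × ℝ → Fin n → ℝ) (p : ℝ × ℝ) (a b c d : ℝ) : Fin n → ℝ :=
  (a * c) • sUU x p + (a * d + b * c) • sUV x p + (b * d) • sVV x p

/-- `(a x_u + b x_v, c x_u + d x_v)` is an orthonormal tangent frame with `X₁² = -1`. -/
def OrthFrame (x : ℝ × ℝ → Fin n → ℝ) (p : ℝ × ℝ) (a b c d : ℝ) : Prop :=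
  mink (a • xu x p + b • xv x p) (a • xu x p + b • xv x p) = -1 ∧
  mink (c • xu x p + d • xv x p) (c • xu x p + d • xv x p) = 1 ∧
  mink (a • xu x p + b • xv x p) (c • xu x p + d • xv x p) = 0

end DNum

open DNum

section Aux

variable {n : ℕ}

lemma mink_add_left (a b c : Fin n → ℝ) : mink (a + b) c = mink a c + mink b c := by
  unfold mink
  rw [← Finset.sum_add_distrib]
  exact Finset.sum_congr rfl fun i _ => by simp only [Pi.add_apply]; ring

lemma mink_sub_left (a b c : Fin n → ℝ) : mink (a - b) c = mink a c - mink b c := by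
  unfold mink
  rw [← Finset.sum_sub_distrib]
  exact Finset.sum_congr rfl fun i _ => by simp only [Pi.sub_apply]; ring

lemma mink_smul_left (r : ℝ) (a c : Fin n → ℝ) : mink (r • a) c = r * mink a c := by
  unfold mink
  rw [Finset.mul_sum]
  exact Finset.sum_congr rfl fun i _ => by simp only [Pi.smul_apply, smul_eq_mul]; ring

lemma mink_comm (a b : Fin n → ℝ) : mink a b = mink b a :=
  Finset.sum_congr rfl fun i _ => by ring

lemma mink_zero_left (c : Fin n → ℝ) : mink 0 c = 0 := by
  unfold mink; simp

lemma mink_neg_neg (a b : Fin n → ℝ) : mink (-a) (-b) = mink a b := by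
  unfold mink
  exact Finset.sum_congr rfl fun i _ => by simp only [Pi.neg_apply]; ring

lemma mink_comb (u v : Fin n → ℝ) (a b c d : ℝ) :
    mink (a • u + b • v) (c • u + d • v) =
      a * c * mink u u + (a * d + b * c) * mink u v + b * d * mink v v := by
  unfold mink
  rw [Finset.mul_sum, Finset.mul_sum, Finset.mul_sum, ← Finset.sum_add_distrib,
    ← Finset.sum_add_distrib]
  exact Finset.sum_congr rfl fun i _ => by
    simp only [Pi.add_apply, Pi.smul_apply, smul_eq_mul]; ring

/-- A vector Minkowski-orthogonal to a timelike vector which is null must vanish. -/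
lemma mink_null_eq_zero {u w : Fin n → ℝ} (hu : mink u u < 0)
    (how : mink w u = 0) (hww : mink w w = 0) : w = 0 := by
  cases n with
  | zero =>
      funext i; exact i.elim0
  | succ m =>
      have hrw : ∀ a b : Fin (m + 1) → ℝ,
          mink a b = -(a 0 * b 0) + ∑ i : Fin m, a i.succ * b i.succ := by
        intro a b
        unfold mink
        rw [Fin.sum_univ_succ]
        congr 1
        · simp [minkEta]
        · exact Finset.sum_congr rfl fun i _ => by
            simp [minkEta, Fin.val_succ]
      rw [hrw] at hu how hww
      have huu : ∑ i : Fin m, (u i.succ) ^ 2 < u 0 ^ 2 := by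
        have e : ∑ i : Fin m, u i.succ * u i.succ = ∑ i : Fin m, (u i.succ) ^ 2 :=
          Finset.sum_congr rfl fun i _ => by ring
        nlinarith [hu]
      have hww' : ∑ i : Fin m, (w i.succ) ^ 2 = w 0 ^ 2 := by
        have e : ∑ i : Fin m, w i.succ * w i.succ = ∑ i : Fin m, (w i.succ) ^ 2 :=
          Finset.sum_congr rfl fun i _ => by ring
        nlinarith [hww]
      have how' : ∑ i : Fin m, w i.succ * u i.succ = w 0 * u 0 := by linarith [how]
      have cs := Finset.sum_mul_sq_le_sq_mul_sq Finset.univ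
        (fun i : Fin m => w i.succ) (fun i : Fin m => u i.succ)
      rw [how', hww'] at cs
      have hw0sq : w 0 ^ 2 ≤ 0 := by nlinarith [cs, huu, sq_nonneg (w 0)]
      have hw0 : w 0 = 0 :=
        (pow_eq_zero_iff two_ne_zero).mp (le_antisymm hw0sq (sq_nonneg _))
      have hsum : ∑ i : Fin m, (w i.succ) ^ 2 = 0 := by rw [hww', hw0]; ring
      have hzero : ∀ i : Fin m, w i.succ = 0 := by
        intro i
        have h := (Finset.sum_eq_zero_iff_of_nonneg
          (fun i _ => sq_nonneg (w i.succ))).mp hsum i (Finset.mem_univ i)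
        exact (pow_eq_zero_iff two_ne_zero).mp h
      funext i
      refine Fin.cases ?_ ?_ i
      · exact hw0
      · exact hzero

lemma absSq_eq_mul (x : ℝ × ℝ → Fin n → ℝ) (p : ℝ × ℝ) :
    absSq (minkD (SigmaJ x p) (SigmaJ x p)) =
      mink (sUU x p - sUV x p) (sUU x p - sUV x p) *
        mink (sUU x p + sUV x p) (sUU x p + sUV x p) := by
  have habs : ∀ t : DNum, absSq t = t.1 * t.2 := fun t => by
    simp only [absSq, re, conj, Prod.fst_mul, Prod.snd_mul]; ring
  rw [habs]
  have h1 : (minkD (SigmaJ x p) (SigmaJ x p)).1 =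
      mink (sUU x p - sUV x p) (sUU x p - sUV x p) := by
    unfold minkD mink
    rw [Prod.fst_sum]
    refine Finset.sum_congr rfl fun i _ => ?_
    simp only [SigmaJ, mk', ofReal, j, Prod.fst_mul, Prod.fst_add, Prod.snd_mul,
      Prod.snd_add, Prod.mk_mul_mk, Prod.mk_add_mk, Pi.sub_apply]
    ring
  have h2 : (minkD (SigmaJ x p) (SigmaJ x p)).2 =
      mink (sUU x p + sUV x p) (sUU x p + sUV x p) := by
    unfold minkD mink
    rw [Prod.snd_sum]
    refine Finset.sum_congr rfl fun i _ => ?_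
    simp only [SigmaJ, mk', ofReal, j, Prod.fst_mul, Prod.fst_add, Prod.snd_mul,
      Prod.snd_add, Prod.mk_mul_mk, Prod.mk_add_mk, Pi.add_apply]
    ring
  rw [h1, h2]

lemma perp_mink_xu (x : ℝ × ℝ → Fin n → ℝ) (p : ℝ × ℝ)
    (hE : Efun x p ≠ 0) (hF : Ffun x p = 0) (w : Fin n → ℝ) :
    mink (perp x p w) (xu x p) = 0 := by
  have hvu : mink (xv x p) (xu x p) = 0 := by rw [mink_comm]; exact hF
  have huu : mink (xu x p) (xu x p) = Efun x p := rfl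
  unfold perp
  rw [mink_sub_left, mink_sub_left, mink_smul_left, mink_smul_left, hvu, huu]
  field_simp
  ring

end Aux


/-- Degenerate points of a minimal time-like surface: `(Φ′^⊥)²(p) ∈ D₀` iff for
every (equivalently, some) orthonormal tangent frame `(X₁,X₂)` with `X₁² = -1`
one has `σ(X₁,X₁) = ±σ(X₁,X₂)`; at every degenerate point `K = 0`. -/
theorem stmt17 (n : ℕ) (x : ℝ × ℝ → Fin n → ℝ) (U : Set (ℝ × ℝ)) (hU : IsOpen U)
    (hsm : ContDiffOn ℝ (⊤ : ℕ∞) x U) (hiso : ∀ p ∈ U, Isoth x p)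
    (hmin : ∀ p ∈ U, Hmean x p = 0) (p : ℝ × ℝ) (hp : p ∈ U) :
    (absSq (minkD (SigmaJ x p) (SigmaJ x p)) = 0 ↔
      ∀ a b c d : ℝ, OrthFrame x p a b c d →
        sigComb x p a b a b = sigComb x p a b c d ∨
        sigComb x p a b a b = - sigComb x p a b c d) ∧
    (absSq (minkD (SigmaJ x p) (SigmaJ x p)) = 0 ↔
      ∃ a b c d : ℝ, OrthFrame x p a b c d ∧
        (sigComb x p a b a b = sigComb x p a b c d ∨
         sigComb x p a b a b = - sigComb x p a b c d)) ∧
    (absSq (minkD (SigmaJ x p) (SigmaJ x p)) = 0 → Kgauss x p = 0) := by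
  obtain ⟨hE, hG, hF⟩ := hiso p hp
  have hEne : Efun x p ≠ 0 := ne_of_lt hE
  have hEm : mink (xu x p) (xu x p) < 0 := hE
  have hEmne : mink (xu x p) (xu x p) ≠ 0 := ne_of_lt hEm
  have hFm : mink (xu x p) (xv x p) = 0 := hF
  have hGm : mink (xv x p) (xv x p) = - mink (xu x p) (xu x p) := hG
  -- minimality : σ(x_v,x_v) = σ(x_u,x_u)
  have hVV : sVV x p = sUU x p := by
    have h := hmin p hp
    unfold Hmean at h
    rcases smul_eq_zero.mp h with h | h
    · exact absurd h (one_div_ne_zero (mul_ne_zero two_ne_zero hEne))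
    · exact (sub_eq_zero.mp h).symm
  have hAu : mink (sUU x p) (xu x p) = 0 := perp_mink_xu x p hEne hF _
  have hBu : mink (sUV x p) (xu x p) = 0 := perp_mink_xu x p hEne hF _
  -- the core characterization of degeneracy
  have core : absSq (minkD (SigmaJ x p) (SigmaJ x p)) = 0 ↔
      (sUU x p = sUV x p ∨ sUU x p = - sUV x p) := by
    rw [absSq_eq_mul, mul_eq_zero]
    constructor
    · rintro (h | h)
      · left
        have hperp : mink (sUU x p - sUV x p) (xu x p) = 0 := by
          rw [mink_sub_left, hAu, hBu, sub_zero]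
        exact sub_eq_zero.mp (mink_null_eq_zero hEm hperp h)
      · right
        have hperp : mink (sUU x p + sUV x p) (xu x p) = 0 := by
          rw [mink_add_left, hAu, hBu, add_zero]
        exact add_eq_zero_iff_eq_neg.mp (mink_null_eq_zero hEm hperp h)
    · rintro (h | h)
      · left; rw [h, sub_self, mink_zero_left]
      · right; rw [h, neg_add_cancel, mink_zero_left]
  -- consequences of being an orthonormal frame
  have frame : ∀ a b c d : ℝ, OrthFrame x p a b c d →
      (a + b ≠ 0 ∧ a - b ≠ 0) ∧ ((c = b ∧ d = a) ∨ (c = -b ∧ d = -a)) := by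
    intro a b c d hof
    obtain ⟨h1, h2, h3⟩ := hof
    rw [mink_comb, hFm, hGm] at h1 h2 h3
    have e1 : (a + b) * (a - b) * mink (xu x p) (xu x p) = -1 := by linear_combination h1
    have e2 : (c + d) * (c - d) * mink (xu x p) (xu x p) = 1 := by linear_combination h2
    have hac : (a * c - b * d) * mink (xu x p) (xu x p) = 0 := by linear_combination h3
    have hac' : a * c = b * d := by
      rcases mul_eq_zero.mp hac with h | h
      · linarith
      · exact absurd h hEmne
    have hα : a + b ≠ 0 := by
      intro h
      rw [h, zero_mul, zero_mul] at e1
      norm_num at e1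
    have hβ : a - b ≠ 0 := by
      intro h
      rw [h, mul_zero, zero_mul] at e1
      norm_num at e1
    have hcross : (a + b) * (c - d) + (a - b) * (c + d) = 0 := by
      linear_combination 2 * hac'
    have hsqP : (a + b) ^ 2 = (c + d) ^ 2 := by
      linear_combination ((a + b) * (c + d) * mink (xu x p) (xu x p)) * hcross -
        (a + b) ^ 2 * e2 - (c + d) ^ 2 * e1
    have hcd : (c = b ∧ d = a) ∨ (c = -b ∧ d = -a) := by
      have h9 : ((c + d) - (a + b)) * ((c + d) + (a + b)) = 0 := by
        linear_combination (-1 : ℝ) * hsqP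
      rcases mul_eq_zero.mp h9 with h9 | h9
      · have h10 : (a + b) * ((c - d) + (a - b)) = 0 := by
          linear_combination hcross - (a - b) * h9
        have h11 := (mul_eq_zero.mp h10).resolve_left hα
        exact Or.inl ⟨by linarith, by linarith⟩
      · have h10 : (a + b) * ((c - d) - (a - b)) = 0 := by
          linear_combination hcross - (a - b) * h9
        have h11 := (mul_eq_zero.mp h10).resolve_left hα
        exact Or.inr ⟨by linarith, by linarith⟩
    exact ⟨⟨hα, hβ⟩, hcd⟩
  -- forward: degenerate implies the frame condition for every frame
  have fwd : (sUU x p = sUV x p ∨ sUU x p = - sUV x p) →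
      ∀ a b c d : ℝ, OrthFrame x p a b c d →
        sigComb x p a b a b = sigComb x p a b c d ∨
        sigComb x p a b a b = - sigComb x p a b c d := by
    intro hab a b c d hof
    obtain ⟨-, hcd⟩ := frame a b c d hof
    rcases hcd with ⟨hc, hd⟩ | ⟨hc, hd⟩ <;> subst hc <;> subst hd <;>
      rcases hab with hab | hab
    · left; unfold sigComb; rw [hVV, hab]; module
    · right; unfold sigComb; rw [hVV, hab]; module
    · right; unfold sigComb; rw [hVV, hab]; module
    · left; unfold sigComb; rw [hVV, hab]; module
  -- backward: the frame condition for one frame implies degeneracy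
  have bwd : ∀ a b c d : ℝ, OrthFrame x p a b c d →
      (sigComb x p a b a b = sigComb x p a b c d ∨
       sigComb x p a b a b = - sigComb x p a b c d) →
      (sUU x p = sUV x p ∨ sUU x p = - sUV x p) := by
    intro a b c d hof heq
    obtain ⟨⟨hα, hβ⟩, hcd⟩ := frame a b c d hof
    have t0 : ∀ r s u' v' : ℝ, sigComb x p r s u' v' =
        (r * u' + s * v') • sUU x p + (r * v' + s * u') • sUV x p := by
      intro r s u' v'
      unfold sigComb
      rw [hVV]
      module
    rcases hcd with ⟨hc, hd⟩ | ⟨hc, hd⟩ <;> rcases heq with heq | heq <;>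
      rw [t0, t0, hc, hd] at heq
    · have h5 : ((a - b) ^ 2) • (sUU x p - sUV x p) = (0 : Fin n → ℝ) := by
        linear_combination (norm := module) heq
      have h6 := (smul_eq_zero.mp h5).resolve_left (pow_ne_zero 2 hβ)
      exact Or.inl (sub_eq_zero.mp h6)
    · have h5 : ((a + b) ^ 2) • (sUU x p + sUV x p) = (0 : Fin n → ℝ) := by
        linear_combination (norm := module) heq
      have h6 := (smul_eq_zero.mp h5).resolve_left (pow_ne_zero 2 hα)
      exact Or.inr (add_eq_zero_iff_eq_neg.mp h6)
    · have h5 : ((a + b) ^ 2) • (sUU x p + sUV x p) = (0 : Fin n → ℝ) := by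
        linear_combination (norm := module) heq
      have h6 := (smul_eq_zero.mp h5).resolve_left (pow_ne_zero 2 hα)
      exact Or.inr (add_eq_zero_iff_eq_neg.mp h6)
    · have h5 : ((a - b) ^ 2) • (sUU x p - sUV x p) = (0 : Fin n → ℝ) := by
        linear_combination (norm := module) heq
      have h6 := (smul_eq_zero.mp h5).resolve_left (pow_ne_zero 2 hβ)
      exact Or.inl (sub_eq_zero.mp h6)
  -- existence of an orthonormal frame
  have hframe : OrthFrame x p (Real.sqrt (-Efun x p))⁻¹ 0 0 (Real.sqrt (-Efun x p))⁻¹ := by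
    have hpos : (0 : ℝ) < -Efun x p := by linarith
    have hrr : (Real.sqrt (-Efun x p))⁻¹ * (Real.sqrt (-Efun x p))⁻¹ =
        (-(mink (xu x p) (xu x p)))⁻¹ := by
      rw [← mul_inv]
      congr 1
      exact Real.mul_self_sqrt hpos.le
    refine ⟨?_, ?_, ?_⟩ <;> rw [mink_comb, hFm, hGm]
    · rw [hrr]; field_simp; ring
    · rw [hrr]; field_simp; ring
    · ring
  refine ⟨?_, ?_, ?_⟩
  · rw [core]
    exact ⟨fwd, fun h => bwd _ _ _ _ hframe (h _ _ _ _ hframe)⟩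
  · rw [core]
    constructor
    · intro h
      exact ⟨_, _, _, _, hframe, fwd h _ _ _ _ hframe⟩
    · rintro ⟨a, b, c, d, hof, heq⟩
      exact bwd a b c d hof heq
  · intro h
    rcases core.mp h with hab | hab
    · unfold Kgauss
      rw [hab, neg_add_cancel, zero_div]
    · unfold Kgauss
      rw [hab, mink_neg_neg, neg_add_cancel, zero_div]
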